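/- arXiv:2402.06161 — 3 statements merged into one kernel-verified Lean document; each statement's English description precedes it below -/
import Mathlib

section
/- The function g(x) = x·e^{-x²}/erf(x) is monotonically decreasing on (0, ∞). -/
open Real

noncomputable def erf (x : ℝ) : ℝ := (2 / Real.sqrt Real.pi) * ∫ t in (0:ℝ)..x, Real.exp (-t^2)

/-!
Write `g = N / erf` with `N x = x e^{-x²}`, so that `N' x = (1 - 2x²) e^{-x²}` and
`erf' x = (2/√π) e^{-x²}`. The sign of `g'` is that of `(1 - 2x²) erf x - (2/√π) N x`.
Since `N(0) = 0`, `N x = ∫₀ˣ (1 - 2t²) e^{-t²} dt`, and as `1 - 2t²` strictly decreases on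
`[0, x]` this integral exceeds `(1 - 2x²) ∫₀ˣ e^{-t²} dt`; hence `g' < 0`.
-/

open Set intervalIntegral

lemma mul_integral_lt_integral_mul_of_strictAntiOn {φ w : ℝ → ℝ} {a b : ℝ} (hab : a < b)
    (hφ : ContinuousOn φ (Icc a b)) (hw : ContinuousOn w (Icc a b))
    (hw_pos : ∀ t ∈ Icc a b, 0 < w t) (hanti : StrictAntiOn φ (Icc a b)) :
    φ b * ∫ t in a..b, w t < ∫ t in a..b, φ t * w t := by
  have ha : a ∈ Icc a b := left_mem_Icc.2 hab.le
  have hb : b ∈ Icc a b := right_mem_Icc.2 hab.le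
  rw [← integral_const_mul]
  refine integral_lt_integral_of_continuousOn_of_le_of_exists_lt hab
    (continuousOn_const.mul hw) (hφ.mul hw) (fun t ht => ?_) ⟨a, ha, ?_⟩
  · have ht' : t ∈ Icc a b := Ioc_subset_Icc_self ht
    exact mul_le_mul_of_nonneg_right (hanti.antitoneOn ht' hb ht'.2) (hw_pos t ht').le
  · exact mul_lt_mul_of_pos_right (hanti ha hb hab) (hw_pos a ha)

lemma continuous_exp_neg_sq : Continuous fun t : ℝ => exp (-t ^ 2) := by
  fun_prop

lemma erf_pos {x : ℝ} (hx : 0 < x) : 0 < erf x :=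
  mul_pos (by positivity) <| intervalIntegral_pos_of_pos_on
    (continuous_exp_neg_sq.intervalIntegrable 0 x) (fun t _ => exp_pos _) hx

lemma hasDerivAt_erf (x : ℝ) : HasDerivAt erf (2 / √π * exp (-x ^ 2)) x :=
  (continuous_exp_neg_sq.integral_hasStrictDerivAt 0 x).hasDerivAt.const_mul _

lemma hasDerivAt_mul_exp_neg_sq (x : ℝ) :
    HasDerivAt (fun t : ℝ => t * exp (-t ^ 2)) ((1 - 2 * x ^ 2) * exp (-x ^ 2)) x := by
  have h : HasDerivAt (fun t : ℝ => t * exp (-t ^ 2))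
      (1 * exp (-x ^ 2) + x * (exp (-x ^ 2) * -(2 * x ^ 1))) x :=
    (hasDerivAt_id x).mul (hasDerivAt_pow 2 x).neg.exp
  convert h using 1
  ring

lemma integral_one_sub_two_mul_sq_mul_exp_neg_sq (x : ℝ) :
    ∫ t in (0:ℝ)..x, (1 - 2 * t ^ 2) * exp (-t ^ 2) = x * exp (-x ^ 2) := by
  rw [integral_eq_sub_of_hasDerivAt (fun t _ => hasDerivAt_mul_exp_neg_sq t)
    (Continuous.intervalIntegrable (by fun_prop) 0 x)]
  simp

lemma one_sub_two_mul_sq_mul_erf_lt {x : ℝ} (hx : 0 < x) :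
    (1 - 2 * x ^ 2) * erf x < 2 / √π * (x * exp (-x ^ 2)) := by
  have hanti : StrictAntiOn (fun t : ℝ => 1 - 2 * t ^ 2) (Icc 0 x) := fun s hs t _ hst => by
    have := hs.1
    nlinarith
  have key := mul_integral_lt_integral_mul_of_strictAntiOn hx (by fun_prop)
    continuous_exp_neg_sq.continuousOn (fun t _ => exp_pos (-t ^ 2)) hanti
  rw [integral_one_sub_two_mul_sq_mul_exp_neg_sq] at key
  rw [erf, mul_left_comm]
  exact mul_lt_mul_of_pos_left key (by positivity)

theorem g_strictAnti :
    StrictAntiOn (fun x : ℝ => x * Real.exp (-x^2) / erf x) (Set.Ioi (0:ℝ)) := by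
  have hderiv : ∀ x ∈ Ioi (0:ℝ), HasDerivAt (fun x : ℝ => x * exp (-x ^ 2) / erf x)
      (((1 - 2 * x ^ 2) * exp (-x ^ 2) * erf x - x * exp (-x ^ 2) * (2 / √π * exp (-x ^ 2)))
        / erf x ^ 2) x := fun x hx =>
    (hasDerivAt_mul_exp_neg_sq x).div (hasDerivAt_erf x) (erf_pos hx).ne'
  refine strictAntiOn_of_hasDerivWithinAt_neg (convex_Ioi 0)
    (fun x hx => (hderiv x hx).continuousAt.continuousWithinAt)
    (fun x hx => (hderiv x (interior_subset hx)).hasDerivWithinAt) (fun x hx => ?_)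
  replace hx : 0 < x := interior_subset hx
  refine div_neg_of_neg_of_pos ?_ (pow_pos (erf_pos hx) 2)
  have hnum : (1 - 2 * x ^ 2) * exp (-x ^ 2) * erf x - x * exp (-x ^ 2) * (2 / √π * exp (-x ^ 2))
      = exp (-x ^ 2) * ((1 - 2 * x ^ 2) * erf x - 2 / √π * (x * exp (-x ^ 2))) := by ring
  rw [hnum]
  exact mul_neg_of_pos_of_neg (exp_pos _) (sub_neg.2 (one_sub_two_mul_sq_mul_erf_lt hx))
end

section
/- Let 0 < a ≤ c, 0 < b ≤ d, SNR > 0, T > 0, and M > 0. Define the coverage probability proxy P(β) = K·(erf(a·f(β))·erf(b·f(β)))/(erf(c·f(β))·erf(d·f(β))) where f(β) = √(1+β·SNR) and K > 0. Then P is monotonically nondecreasing in β on [0, T/M). -/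
open Real

noncomputable def Ig (p r : ℝ) : ℝ := ∫ s in (0:ℝ)..r, Real.exp (-(p * s^2))

lemma Ig_cont (p : ℝ) : Continuous fun s : ℝ => Real.exp (-(p * s^2)) := by continuity

lemma Ig_intble (p u v : ℝ) :
    IntervalIntegrable (fun s : ℝ => Real.exp (-(p * s^2))) MeasureTheory.volume u v :=
  (Ig_cont p).intervalIntegrable u v

lemma Ig_pos (p : ℝ) {r : ℝ} (hr : 0 < r) : 0 < Ig p r := by
  apply intervalIntegral.intervalIntegral_pos_of_pos_on (Ig_intble p 0 r)
  · intro x _; positivity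
  · exact hr

lemma Ig_nonneg (p : ℝ) {r : ℝ} (hr : 0 ≤ r) : 0 ≤ Ig p r := by
  rcases hr.lt_or_eq with h | h
  · exact (Ig_pos p h).le
  · simp [Ig, ← h]

-- L1 : Ig p a ≤ exp((q-p) a²) * Ig q a
lemma Ig_le (p q : ℝ) {r : ℝ} (hpq : p ≤ q) (hr : 0 ≤ r) :
    Ig p r ≤ Real.exp ((q - p) * r^2) * Ig q r := by
  have : Real.exp ((q - p) * r^2) * Ig q r
      = ∫ s in (0:ℝ)..r, Real.exp ((q - p) * r^2) * Real.exp (-(q * s^2)) := by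
    rw [Ig, intervalIntegral.integral_const_mul]
  rw [this]
  apply intervalIntegral.integral_mono_on hr (Ig_intble p 0 r)
  · exact (Continuous.intervalIntegrable (by continuity) 0 r)
  · intro s hs
    rw [← Real.exp_add]
    apply Real.exp_le_exp.2
    have h1 : s^2 ≤ r^2 := by nlinarith [hs.1, hs.2]
    nlinarith
-- L2 : exp((q-p) a²) * (Ig q c - Ig q a) ≤ Ig p c - Ig p a
lemma Ig_tail_le (p q : ℝ) {r c : ℝ} (hpq : p ≤ q) (hr : 0 ≤ r) (hrc : r ≤ c) :
    Real.exp ((q - p) * r^2) * (Ig q c - Ig q r) ≤ Ig p c - Ig p r := by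
  have hq : Ig q c - Ig q r = ∫ s in r..c, Real.exp (-(q * s^2)) := by
    rw [Ig, Ig, intervalIntegral.integral_interval_sub_left (Ig_intble q 0 c) (Ig_intble q 0 r)]
  have hp : Ig p c - Ig p r = ∫ s in r..c, Real.exp (-(p * s^2)) := by
    rw [Ig, Ig, intervalIntegral.integral_interval_sub_left (Ig_intble p 0 c) (Ig_intble p 0 r)]
  rw [hq, hp, ← intervalIntegral.integral_const_mul]
  apply intervalIntegral.integral_mono_on hrc
  · exact (Continuous.intervalIntegrable (by continuity) r c)
  · exact Ig_intble p r c
  · intro s hs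
    rw [← Real.exp_add]
    apply Real.exp_le_exp.2
    have h1 : r^2 ≤ s^2 := by nlinarith [hs.1, hs.2, hr]
    nlinarith

lemma Ig_key {p q r c : ℝ} (hp : 0 ≤ p) (hpq : p ≤ q) (hr : 0 < r) (hrc : r ≤ c) :
    Ig p r * Ig q c ≤ Ig q r * Ig p c := by
  set D := Real.exp ((q - p) * r^2) with hD
  have hDpos : 0 < D := Real.exp_pos _
  have h1 : Ig p r ≤ D * Ig q r := Ig_le p q hpq hr.le
  have h2 : D * (Ig q c - Ig q r) ≤ Ig p c - Ig p r := Ig_tail_le p q hpq hr.le hrc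
  have hA : 0 < Ig q r := Ig_pos q hr
  have hA2 : 0 ≤ Ig p r := (Ig_pos p hr).le
  have hJq : 0 ≤ Ig q c - Ig q r := by
    rw [Ig, Ig, intervalIntegral.integral_interval_sub_left (Ig_intble q 0 c) (Ig_intble q 0 r)]
    apply intervalIntegral.integral_nonneg hrc
    intro s _; positivity
  -- A * Jq ≤ (D A') Jq = A' (D Jq) ≤ A' Jp
  have step1 : Ig p r * (Ig q c - Ig q r) ≤ (D * Ig q r) * (Ig q c - Ig q r) :=
    mul_le_mul_of_nonneg_right h1 hJq
  have step2 : Ig q r * (D * (Ig q c - Ig q r)) ≤ Ig q r * (Ig p c - Ig p r) :=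
    mul_le_mul_of_nonneg_left h2 hA.le
  nlinarith [step1, step2]

lemma erf_eq (r x : ℝ) : erf (r * x) = (2 / Real.sqrt Real.pi) * (x * Ig (x^2) r) := by
  have h := intervalIntegral.smul_integral_comp_mul_left
    (fun t : ℝ => Real.exp (-t^2)) x (a := 0) (b := r)
  simp only [mul_zero, smul_eq_mul] at h
  have h2 : (∫ s in (0:ℝ)..r, Real.exp (-(x * s)^2)) = Ig (x^2) r := by
    rw [Ig]
    apply intervalIntegral.integral_congr
    intro s _
    ring_nf
  rw [erf, show r * x = x * r by ring, ← h, h2]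

lemma erf_pos_s3 {z : ℝ} (hz : 0 < z) : 0 < erf z := by
  have h : erf z = erf (z * 1) := by norm_num
  rw [h, erf_eq]
  have hpi : 0 < Real.sqrt Real.pi := Real.sqrt_pos.2 Real.pi_pos
  have h1 : 0 < Ig ((1:ℝ)^2) z := Ig_pos _ hz
  exact mul_pos (by positivity) (by simpa using h1)

lemma erf_key {a c x y : ℝ} (ha : 0 < a) (hac : a ≤ c) (hx : 0 < x) (hxy : x ≤ y) :
    erf (a * x) * erf (c * y) ≤ erf (a * y) * erf (c * x) := by
  rw [erf_eq a x, erf_eq c y, erf_eq a y, erf_eq c x]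
  have hkey : Ig (x^2) a * Ig (y^2) c ≤ Ig (y^2) a * Ig (x^2) c :=
    Ig_key (by positivity) (by nlinarith) ha hac
  have hpi : 0 < Real.sqrt Real.pi := Real.sqrt_pos.2 Real.pi_pos
  have hC : 0 ≤ (2 / Real.sqrt Real.pi)^2 * (x * y) :=
    mul_nonneg (sq_nonneg _) (mul_nonneg hx.le (hx.trans_le hxy).le)
  calc (2 / Real.sqrt Real.pi) * (x * Ig (x^2) a) * ((2 / Real.sqrt Real.pi) * (y * Ig (y^2) c))
      = ((2 / Real.sqrt Real.pi)^2 * (x * y)) * (Ig (x^2) a * Ig (y^2) c) := by ring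
    _ ≤ ((2 / Real.sqrt Real.pi)^2 * (x * y)) * (Ig (y^2) a * Ig (x^2) c) :=
        mul_le_mul_of_nonneg_left hkey hC
    _ = (2 / Real.sqrt Real.pi) * (y * Ig (y^2) a) * ((2 / Real.sqrt Real.pi) * (x * Ig (x^2) c)) := by ring

theorem coverage_monotone (a b c d SNR T M K : ℝ)
    (ha : 0 < a) (hac : a ≤ c) (hb : 0 < b) (hbd : b ≤ d)
    (hSNR : 0 < SNR) (hT : 0 < T) (hM : 0 < M) (hK : 0 < K) :
    MonotoneOn
      (fun β : ℝ =>
        K * (erf (a * Real.sqrt (1 + β * SNR)) * erf (b * Real.sqrt (1 + β * SNR))) /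
          (erf (c * Real.sqrt (1 + β * SNR)) * erf (d * Real.sqrt (1 + β * SNR))))
      (Set.Ico (0:ℝ) (T / M)) := by
  intro β₁ hβ₁ β₂ hβ₂ h12
  simp only
  set x := Real.sqrt (1 + β₁ * SNR) with hxdef
  set y := Real.sqrt (1 + β₂ * SNR) with hydef
  have h1pos : (0:ℝ) < 1 + β₁ * SNR := by nlinarith [hβ₁.1]
  have hx : 0 < x := Real.sqrt_pos.2 h1pos
  have hxy : x ≤ y := Real.sqrt_le_sqrt (by nlinarith [hβ₁.1])
  have hy : 0 < y := lt_of_lt_of_le hx hxy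
  have h0c : 0 < c := lt_of_lt_of_le ha hac
  have h0d : 0 < d := lt_of_lt_of_le hb hbd
  have hkey1 := erf_key ha hac hx hxy
  have hkey2 := erf_key hb hbd hx hxy
  have E3 : 0 < erf (c * x) := erf_pos_s3 (by positivity)
  have E4 : 0 < erf (d * x) := erf_pos_s3 (by positivity)
  have F3 : 0 < erf (c * y) := erf_pos_s3 (by positivity)
  have F4 : 0 < erf (d * y) := erf_pos_s3 (by positivity)
  have E1 : 0 < erf (a * x) := erf_pos_s3 (by positivity)
  have E2 : 0 < erf (b * x) := erf_pos_s3 (by positivity)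
  have F1 : 0 < erf (a * y) := erf_pos_s3 (by positivity)
  have F2 : 0 < erf (b * y) := erf_pos_s3 (by positivity)
  rw [div_le_div_iff₀ (by positivity) (by positivity)]
  have hprod : (erf (a * x) * erf (c * y)) * (erf (b * x) * erf (d * y))
      ≤ (erf (a * y) * erf (c * x)) * (erf (b * y) * erf (d * x)) :=
    mul_le_mul hkey1 hkey2 (by positivity) (by positivity)
  nlinarith [mul_le_mul_of_nonneg_left hprod hK.le]
end

section
/- For 0 < a ≤ c, the derivative of erf(a·y)/erf(c·y) with respect to y equals (2/(√π·y))·(erf(a·y)/erf(c·y))·(a·y·e^{-a²y²}/erf(a·y) − c·y·e^{-c²y²}/erf(c·y)), and this derivative is nonnegative for all y > 0. -/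
/-!
Write `erf x = (2/√π) · x · ∫₀¹ exp (-(x s)²) ds`. For `0 ≤ u ≤ v` and `s ∈ [0, 1]` one has
`v² + u² s² ≥ u² + v² s²`, since the difference is `(v² - u²)(1 - s²)`; integrating
`exp (-v²) exp (-(u s)²) ≤ exp (-u²) exp (-(v s)²)` over `[0, 1]` gives
`v exp (-v²) erf u ≤ u exp (-u²) erf v`, i.e. `x ↦ x exp (-x²) / erf x` is antitone on `(0, ∞)`.
The derivative of `erf (a y) / erf (c y)` is the ratio times the difference of the logarithmic
derivatives, which is `(2 / (√π y))` times the difference of this function at `a y` and `c y`.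
-/

open Real

open Set intervalIntegral

theorem HasDerivAt.fun_div_eq_mul_sub {𝕜 𝕜' : Type*} [NontriviallyNormedField 𝕜]
    [NontriviallyNormedField 𝕜'] [NormedAlgebra 𝕜 𝕜'] {f g : 𝕜 → 𝕜'} {f' g' : 𝕜'} {x : 𝕜}
    (hf : HasDerivAt f f' x) (hg : HasDerivAt g g' x) (hfx : f x ≠ 0) (hgx : g x ≠ 0) :
    HasDerivAt (fun y => f y / g y) (f x / g x * (f' / f x - g' / g x)) x := by
  convert hf.fun_div hg hgx using 1
  field_simp

lemma erf_eq_mul_integral_unitInterval (x : ℝ) :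
    erf x = 2 / √π * x * ∫ s in (0 : ℝ)..1, exp (-(x * s) ^ 2) := by
  rw [erf, mul_assoc, ← smul_eq_mul x, smul_integral_comp_mul_left (fun t => exp (-t ^ 2)),
    mul_zero, mul_one]

lemma hasDerivAt_erf_const_mul (a y : ℝ) :
    HasDerivAt (fun y => erf (a * y)) (2 / √π * exp (-(a * y) ^ 2) * a) y :=
  (hasDerivAt_erf (a * y)).comp y ((hasDerivAt_id y).const_mul a |>.congr_deriv (mul_one a))

lemma exp_neg_sq_mul_exp_neg_sq_mul_le {u v s : ℝ} (hu : 0 ≤ u) (huv : u ≤ v) (hs : s ∈ Icc 0 1) :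
    exp (-v ^ 2) * exp (-(u * s) ^ 2) ≤ exp (-u ^ 2) * exp (-(v * s) ^ 2) := by
  rw [← exp_add, ← exp_add, exp_le_exp]
  have : 0 ≤ (v ^ 2 - u ^ 2) * (1 - s ^ 2) :=
    mul_nonneg (by nlinarith) (by nlinarith [hs.1, hs.2])
  linarith

lemma mul_exp_neg_sq_mul_erf_le {u v : ℝ} (hu : 0 ≤ u) (huv : u ≤ v) :
    v * exp (-v ^ 2) * erf u ≤ u * exp (-u ^ 2) * erf v := by
  have hint : exp (-v ^ 2) * ∫ s in (0 : ℝ)..1, exp (-(u * s) ^ 2)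
      ≤ exp (-u ^ 2) * ∫ s in (0 : ℝ)..1, exp (-(v * s) ^ 2) := by
    rw [← integral_const_mul, ← integral_const_mul]
    exact integral_mono_on zero_le_one (by apply Continuous.intervalIntegrable; fun_prop)
      (by apply Continuous.intervalIntegrable; fun_prop)
      fun s hs => exp_neg_sq_mul_exp_neg_sq_mul_le hu huv hs
  have hv : 0 ≤ v := hu.trans huv
  have huv' : 0 ≤ 2 / √π * (u * v) := by positivity
  rw [erf_eq_mul_integral_unitInterval, erf_eq_mul_integral_unitInterval]
  calc v * exp (-v ^ 2) * (2 / √π * u * ∫ s in (0 : ℝ)..1, exp (-(u * s) ^ 2))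
      = 2 / √π * (u * v) * (exp (-v ^ 2) * ∫ s in (0 : ℝ)..1, exp (-(u * s) ^ 2)) := by ring
    _ ≤ 2 / √π * (u * v) * (exp (-u ^ 2) * ∫ s in (0 : ℝ)..1, exp (-(v * s) ^ 2)) :=
      mul_le_mul_of_nonneg_left hint huv'
    _ = u * exp (-u ^ 2) * (2 / √π * v * ∫ s in (0 : ℝ)..1, exp (-(v * s) ^ 2)) := by ring

lemma antitoneOn_mul_exp_neg_sq_div_erf :
    AntitoneOn (fun x => x * exp (-x ^ 2) / erf x) (Ioi 0) := fun u hu v hv huv => by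
  rw [div_le_div_iff₀ (erf_pos hv) (erf_pos hu)]
  exact mul_exp_neg_sq_mul_erf_le (le_of_lt hu) huv

theorem ratio_deriv (a c : ℝ) (ha : 0 < a) (hac : a ≤ c) :
    ∀ y : ℝ, 0 < y →
      HasDerivAt (fun y : ℝ => erf (a*y) / erf (c*y))
        ((2 / (Real.sqrt Real.pi * y)) * (erf (a*y) / erf (c*y)) *
          (a * y * Real.exp (-(a^2 * y^2)) / erf (a*y) -
            c * y * Real.exp (-(c^2 * y^2)) / erf (c*y))) y ∧
      0 ≤ (2 / (Real.sqrt Real.pi * y)) * (erf (a*y) / erf (c*y)) *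
          (a * y * Real.exp (-(a^2 * y^2)) / erf (a*y) -
            c * y * Real.exp (-(c^2 * y^2)) / erf (c*y)) := by
  intro y hy
  have hacy : a * y ≤ c * y := mul_le_mul_of_nonneg_right hac hy.le
  have hay : 0 < a * y := by positivity
  have hcy : 0 < c * y := hay.trans_le hacy
  have herf_ay := erf_pos hay
  have herf_cy := erf_pos hcy
  have hsq (b : ℝ) : b ^ 2 * y ^ 2 = (b * y) ^ 2 := by ring
  simp only [hsq]
  refine ⟨?_, mul_nonneg (by positivity)
    (sub_nonneg.2 (antitoneOn_mul_exp_neg_sq_div_erf hay hcy hacy))⟩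
  refine ((hasDerivAt_erf_const_mul a y).fun_div_eq_mul_sub (hasDerivAt_erf_const_mul c y)
    herf_ay.ne' herf_cy.ne').congr_deriv ?_
  field_simp
end
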